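/- arXiv:2212.12874 — 2 statements merged into one kernel-verified Lean document; each statement's English description precedes it below -/
import Mathlib

section
/- If E[Y|Z] = E[Y] almost surely, then r²(Y,W|Z) = GMC(Y|X) = Var(E[Y|X])/Var(Y). -/
open MeasureTheory ProbabilityTheory Filter

/-- The conditional expectation of a `Memℒp 2` function is in `Memℒp 2`. -/
lemma memℒp_two_condexp {Ω : Type*} (m : MeasurableSpace Ω) {mΩ : MeasurableSpace Ω}
    {μ : Measure Ω} [IsProbabilityMeasure μ] (hm : m ≤ mΩ)
    {Y : Ω → ℝ} (hY : MemLp Y 2 μ) : MemLp (μ[Y|m]) 2 μ := by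
  haveI : SigmaFinite (μ.trim hm) := by
    haveI : IsFiniteMeasure (μ.trim hm) := isFiniteMeasure_trim hm
    infer_instance
  have h_eq : ((condExpL2 ℝ ℝ hm (hY.toLp Y) : Lp ℝ 2 μ) : Ω → ℝ) =ᵐ[μ] μ[Y|m] := by
    refine ae_eq_condExp_of_forall_setIntegral_eq hm (memLp_one_iff_integrable.mp
      (hY.mono_exponent (by norm_num))) (fun s _ hμs => ?_) (fun s hs hμs => ?_) ?_
    · exact (memLp_one_iff_integrable.mp
        ((Lp.memLp ((condExpL2 ℝ ℝ hm (hY.toLp Y) : Lp ℝ 2 μ))).mono_exponent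
        (by norm_num))).integrableOn
    · rw [integral_condExpL2_eq hm (hY.toLp Y) hs hμs.ne]
      exact integral_congr_ae (ae_restrict_of_ae hY.coeFn_toLp)
    · exact lpMeas.aestronglyMeasurable _
  exact (Lp.memLp ((condExpL2 ℝ ℝ hm (hY.toLp Y) : Lp ℝ 2 μ))).ae_eq h_eq

/-- If E[Y|Z] = E[Y] a.s., then r²(Y,W|Z) = GMC(Y|X) = Var(E[Y|X])/Var(Y). -/
theorem stmt10 {Ω : Type*} {mΩ : MeasurableSpace Ω} {μ : Measure Ω} [IsProbabilityMeasure μ]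
    (mZ mX : MeasurableSpace Ω) (hZX : mZ ≤ mX) (hmX : mX ≤ mΩ)
    (Y : Ω → ℝ) (hY : MemLp Y 2 μ)
    (hVar : 0 < variance Y μ)
    (hind : (μ[Y|mZ]) =ᵐ[μ] fun _ => ∫ ω, Y ω ∂μ) :
    (∫ ω, ((μ[Y|mX]) ω - (μ[Y|mZ]) ω) ^ 2 ∂μ)
        / (∫ ω, (Y ω - (μ[Y|mZ]) ω) ^ 2 ∂μ)
      = variance (μ[Y|mX]) μ / variance Y μ := by
  haveI : SigmaFinite (μ.trim hmX) := by
    haveI : IsFiniteMeasure (μ.trim hmX) := isFiniteMeasure_trim hmX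
    infer_instance
  set c : ℝ := ∫ ω, Y ω ∂μ with hc
  have hg : MemLp (μ[Y|mX]) 2 μ := memℒp_two_condexp mX hmX hY
  have hgmean : ∫ ω, (μ[Y|mX]) ω ∂μ = c := integral_condExp hmX
  have hnum : ∫ ω, ((μ[Y|mX]) ω - (μ[Y|mZ]) ω) ^ 2 ∂μ = variance (μ[Y|mX]) μ := by
    rw [variance_eq_integral hg.aemeasurable, hgmean]
    refine integral_congr_ae (hind.mono fun ω hω => ?_)
    simp [hω]
  have hden : ∫ ω, (Y ω - (μ[Y|mZ]) ω) ^ 2 ∂μ = variance Y μ := by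
    rw [variance_eq_integral hY.aemeasurable]
    refine integral_congr_ae (hind.mono fun ω hω => ?_)
    simp [hω, hc]
  rw [hnum, hden]
end

section
/- Cauchy–Schwarz bound for the pGMC numerator: E[(m(X) - h(Z))²] ≥ (E[(Y - h(Z))(W - E[W|Z])])² / E[(W - E[W|Z])²], where m(X) = E[Y|X], h(Z) = E[Y|Z], X = (Z,W), W scalar with E[(W - E[W|Z])²] > 0. -/
open MeasureTheory Filter

lemma aux_integrable_mul {Ω : Type*} {mΩ : MeasurableSpace Ω} {μ : Measure Ω}
    {f g : Ω → ℝ} (hf : MemLp f 2 μ) (hg : MemLp g 2 μ) :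
    Integrable (fun ω => f ω * g ω) μ := by
  have h := L2.integrable_inner (𝕜 := ℝ) (hf.toLp f) (hg.toLp g)
  refine (integrable_congr ?_).mp h
  filter_upwards [hf.coeFn_toLp, hg.coeFn_toLp] with ω h1 h2
  simp [RCLike.inner_apply, h1, h2, mul_comm]

lemma aux_inner_eq {Ω : Type*} {mΩ : MeasurableSpace Ω} {μ : Measure Ω}
    {f g : Ω → ℝ} (hf : MemLp f 2 μ) (hg : MemLp g 2 μ) :
    (inner ℝ (hf.toLp f) (hg.toLp g) : ℝ) = ∫ ω, f ω * g ω ∂μ := by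
  rw [L2.inner_def]
  refine integral_congr_ae ?_
  filter_upwards [hf.coeFn_toLp, hg.coeFn_toLp] with ω h1 h2
  simp [RCLike.inner_apply, h1, h2, mul_comm]

lemma aux_cauchy_schwarz {Ω : Type*} {mΩ : MeasurableSpace Ω} {μ : Measure Ω}
    {f g : Ω → ℝ} (hf : MemLp f 2 μ) (hg : MemLp g 2 μ) :
    (∫ ω, f ω * g ω ∂μ) ^ 2 ≤ (∫ ω, f ω ^ 2 ∂μ) * (∫ ω, g ω ^ 2 ∂μ) := by
  have h := real_inner_mul_inner_self_le (hf.toLp f) (hg.toLp g)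
  rw [aux_inner_eq hf hg, aux_inner_eq hf hf, aux_inner_eq hg hg] at h
  calc (∫ ω, f ω * g ω ∂μ) ^ 2 = (∫ ω, f ω * g ω ∂μ) * (∫ ω, f ω * g ω ∂μ) := sq _
    _ ≤ (∫ ω, f ω * f ω ∂μ) * (∫ ω, g ω * g ω ∂μ) := h
    _ = (∫ ω, f ω ^ 2 ∂μ) * (∫ ω, g ω ^ 2 ∂μ) := by simp_rw [sq]

lemma aux_memℒp_condexp {Ω : Type*} {m mΩ : MeasurableSpace Ω} {μ : Measure Ω}
    [IsFiniteMeasure μ] (hm : m ≤ mΩ) {f : Ω → ℝ}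
    (hf : MemLp f 2 μ) : MemLp (μ[f|m]) 2 μ := by
  have hfi : Integrable f μ := hf.integrable one_le_two
  have hcL2 : MemLp ((condExpL2 ℝ ℝ hm (hf.toLp f) : Lp ℝ 2 μ) : Ω → ℝ) 2 μ := Lp.memLp _
  refine hcL2.ae_eq (ae_eq_condExp_of_forall_setIntegral_eq hm hfi
    (fun s _ _ => (hcL2.integrable one_le_two).integrableOn)
    (fun s hs hμs => ?_) (lpMeas.aestronglyMeasurable _))
  rw [integral_condExpL2_eq hm (hf.toLp f) hs hμs.ne]
  exact setIntegral_congr_ae (hm s hs) (hf.coeFn_toLp.mono fun ω hω _ => hω)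

/-- Cauchy–Schwarz bound for the pGMC numerator:
E[(m(X)-h(Z))²] ≥ (E[(Y-h(Z))(W-E[W|Z])])² / E[(W-E[W|Z])²], with W scalar,
σ(X)-measurable and E[(W-E[W|Z])²] > 0. -/
theorem stmt17 {Ω : Type*} {mΩ : MeasurableSpace Ω} {μ : Measure Ω} [IsProbabilityMeasure μ]
    (mZ mX : MeasurableSpace Ω) (hZX : mZ ≤ mX) (hmX : mX ≤ mΩ)
    (Y W : Ω → ℝ) (hY : MemLp Y 2 μ) (hW : MemLp W 2 μ)
    (hWmeas : StronglyMeasurable[mX] W)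
    (hWres : 0 < ∫ ω, (W ω - (μ[W|mZ]) ω) ^ 2 ∂μ) :
    ∫ ω, ((μ[Y|mX]) ω - (μ[Y|mZ]) ω) ^ 2 ∂μ
      ≥ (∫ ω, (Y ω - (μ[Y|mZ]) ω) * (W ω - (μ[W|mZ]) ω) ∂μ) ^ 2
          / ∫ ω, (W ω - (μ[W|mZ]) ω) ^ 2 ∂μ := by
  have hmZ : mZ ≤ mΩ := hZX.trans hmX
  -- L² membership of the conditional expectations
  have hm2 : MemLp (μ[Y|mX]) 2 μ := aux_memℒp_condexp hmX hY
  have hh2 : MemLp (μ[Y|mZ]) 2 μ := aux_memℒp_condexp hmZ hY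
  have hg2 : MemLp (μ[W|mZ]) 2 μ := aux_memℒp_condexp hmZ hW
  have hWg : MemLp (fun ω => W ω - (μ[W|mZ]) ω) 2 μ := hW.sub hg2
  have hmh : MemLp (fun ω => (μ[Y|mX]) ω - (μ[Y|mZ]) ω) 2 μ := hm2.sub hh2
  have hYm : MemLp (fun ω => Y ω - (μ[Y|mX]) ω) 2 μ := hY.sub hm2
  -- the residual W - E[W|Z] is mX-strongly measurable
  have hfmeas : StronglyMeasurable[mX] (fun ω => W ω - (μ[W|mZ]) ω) :=
    hWmeas.sub (stronglyMeasurable_condExp.mono hZX)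
  -- E[Y - E[Y|X] | X] = 0 a.e.
  have hD0 : μ[(fun ω => Y ω - (μ[Y|mX]) ω)|mX] =ᵐ[μ] 0 := by
    have h1 : μ[Y - μ[Y|mX]|mX] =ᵐ[μ] μ[Y|mX] - μ[μ[Y|mX]|mX] :=
      condExp_sub (hY.integrable one_le_two) (integrable_condExp (m := mX) (f := Y)) mX
    have h2 := condExp_condExp_of_le (le_refl mX) hmX (f := Y) (μ := μ)
    have h1' : μ[(fun ω => Y ω - (μ[Y|mX]) ω)|mX] =ᵐ[μ] μ[Y|mX] - μ[μ[Y|mX]|mX] := h1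
    filter_upwards [h1', h2] with ω hω1 hω2
    simp only [Pi.sub_apply] at hω1
    simp only [Pi.zero_apply]
    rw [hω1, hω2, sub_self]
  -- orthogonality: ∫ (W - E[W|Z]) (Y - E[Y|X]) = 0
  have hzero : ∫ ω, (W ω - (μ[W|mZ]) ω) * (Y ω - (μ[Y|mX]) ω) ∂μ = 0 := by
    have hint : Integrable (fun ω => (W ω - (μ[W|mZ]) ω) * (Y ω - (μ[Y|mX]) ω)) μ :=
      aux_integrable_mul hWg hYm
    have hmul := condExp_mul_of_stronglyMeasurable_left (m := mX) hfmeas hint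
      (hYm.integrable one_le_two)
    have h0 : μ[(fun ω => W ω - (μ[W|mZ]) ω) * (fun ω => Y ω - (μ[Y|mX]) ω)|mX]
        =ᵐ[μ] 0 := by
      filter_upwards [hmul, hD0] with ω hω1 hω2
      simp only [Pi.mul_apply, Pi.zero_apply] at hω1 hω2 ⊢
      rw [hω1, hω2, mul_zero]
    calc ∫ ω, (W ω - (μ[W|mZ]) ω) * (Y ω - (μ[Y|mX]) ω) ∂μ
        = ∫ ω, (μ[(fun ω => W ω - (μ[W|mZ]) ω) * (fun ω => Y ω - (μ[Y|mX]) ω)|mX]) ω ∂μ :=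
          (integral_condExp hmX).symm
      _ = ∫ ω, (0 : Ω → ℝ) ω ∂μ := integral_congr_ae h0
      _ = 0 := by simp
  -- key step: replace Y by m(X) in the cross term
  have hkey : ∫ ω, (Y ω - (μ[Y|mZ]) ω) * (W ω - (μ[W|mZ]) ω) ∂μ
      = ∫ ω, ((μ[Y|mX]) ω - (μ[Y|mZ]) ω) * (W ω - (μ[W|mZ]) ω) ∂μ := by
    have hint1 : Integrable (fun ω => (W ω - (μ[W|mZ]) ω) * (Y ω - (μ[Y|mX]) ω)) μ :=
      aux_integrable_mul hWg hYm
    have hint2 : Integrable (fun ω => ((μ[Y|mX]) ω - (μ[Y|mZ]) ω) * (W ω - (μ[W|mZ]) ω)) μ :=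
      aux_integrable_mul hmh hWg
    have heq : ∀ ω, (Y ω - (μ[Y|mZ]) ω) * (W ω - (μ[W|mZ]) ω)
        = (W ω - (μ[W|mZ]) ω) * (Y ω - (μ[Y|mX]) ω)
          + ((μ[Y|mX]) ω - (μ[Y|mZ]) ω) * (W ω - (μ[W|mZ]) ω) := fun ω => by ring
    rw [integral_congr_ae (Eventually.of_forall heq), integral_add hint1 hint2, hzero,
      zero_add]
  -- Cauchy–Schwarz
  rw [ge_iff_le, div_le_iff₀ hWres, hkey]
  exact aux_cauchy_schwarz hmh hWg
end
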